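/- Let x₁, …, x_M ∈ ℝ^d satisfy ‖x_m‖₂² ≤ C_x² for all m, let β ≥ max{1, C_x²}, define A₀ = β I_d and A_m = A_{m−1} + x_m x_mᵀ, let α ≥ 0, let T ≥ M, and let r₁, …, r_M be nonnegative reals with r_m ≤ 2α √(x_mᵀ A_{m−1}⁻¹ x_m) for every m. Then Σ_{m=1}^M r_m ≤ 2α √(2 T d (log(β + T C_x²/d) − log β)). -/

import Mathlib

/-!
By Cauchy–Schwarz it suffices to bound `Σ_m q_m` with `q_m = x_mᵀ A_m⁻¹ x_m`. Since `A_m ≥ βI` and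
`‖x_m‖² ≤ β`, each `q_m ≤ 1`, hence `q_m ≤ 2 log (1 + q_m)`. By the matrix determinant lemma
`det A_{m+1} = det A_m (1 + q_m)`, so these logarithms telescope to `log det A_M - d log β`, and
Jensen's inequality for `log` on the eigenvalues gives `log det A_M ≤ d log (tr A_M / d)`, where
`tr A_M ≤ βd + T C_x²`.
-/

open Matrix

/-- The design matrix after `m` samples: `A_m = βI_d + Σ_{s<m} x_s x_sᵀ`
(so `A_0 = βI_d` and `A_m = A_{m-1} + x_{m-1} x_{m-1}ᵀ`). -/
noncomputable def designMatrix {d : ℕ} (β : ℝ) (x : ℕ → Fin d → ℝ) (m : ℕ) :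
    Matrix (Fin d) (Fin d) ℝ :=
  β • (1 : Matrix (Fin d) (Fin d) ℝ) + ∑ s ∈ Finset.range m, vecMulVec (x s) (x s)

open Finset

namespace Real

lemma le_two_mul_log_one_add {u : ℝ} (h0 : 0 ≤ u) (h2 : u ≤ 2) : u ≤ 2 * log (1 + u) := by
  have h := le_log_one_add_of_nonneg h0
  rw [div_le_iff₀ (by linarith)] at h
  nlinarith

lemma sum_sqrt_le_sqrt_card_mul_sum {ι : Type*} (s : Finset ι) {f : ι → ℝ}
    (hf : ∀ i, 0 ≤ f i) : ∑ i ∈ s, √(f i) ≤ √(#s * ∑ i ∈ s, f i) := by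
  simpa [sqrt_mul (Nat.cast_nonneg _)] using
    sum_sqrt_mul_sqrt_le s (fun _ => zero_le_one) hf

end Real

namespace Matrix

variable {n : Type*} [Fintype n] [DecidableEq n]

theorem det_add_vecMulVec {α : Type*} [CommRing α] {A : Matrix n n α} (hA : IsUnit A.det)
    (u v : n → α) : (A + vecMulVec u v).det = A.det * (1 + v ⬝ᵥ A⁻¹ *ᵥ u) := by
  rw [vecMulVec_eq Unit, det_add_replicateCol_mul_replicateRow hA]
  congr 1
  rw [Matrix.mul_assoc, ← replicateCol_mulVec, det_unique, add_apply, one_apply_eq,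
    replicateRow_mul_replicateCol_apply]

theorem dotProduct_inv_mulVec_le_div {A : Matrix n n ℝ} (hA : IsUnit A.det) {β : ℝ}
    (hβ : 0 < β) (hAβ : ∀ y, β * (y ⬝ᵥ y) ≤ y ⬝ᵥ A *ᵥ y) (v : n → ℝ) :
    v ⬝ᵥ A⁻¹ *ᵥ v ≤ (v ⬝ᵥ v) / β := by
  set y := A⁻¹ *ᵥ v
  have hAy : A *ᵥ y = v := by rw [mulVec_mulVec, mul_nonsing_inv _ hA, one_mulVec]
  have hlow : β * (y ⬝ᵥ y) ≤ v ⬝ᵥ y := by simpa [hAy, dotProduct_comm y v] using hAβ y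
  have hyy : 0 ≤ y ⬝ᵥ y := by simpa using dotProduct_star_self_nonneg y
  have hcs : (v ⬝ᵥ y) ^ 2 ≤ (v ⬝ᵥ v) * (y ⬝ᵥ y) := by
    simpa [dotProduct, sq] using sum_mul_sq_le_sq_mul_sq univ v y
  have hvv : 0 ≤ v ⬝ᵥ v := by simpa using dotProduct_star_self_nonneg v
  have hq : 0 ≤ v ⬝ᵥ y := (mul_nonneg hβ.le hyy).trans hlow
  have key : (v ⬝ᵥ y) * ((v ⬝ᵥ y) * β) ≤ (v ⬝ᵥ y) * (v ⬝ᵥ v) := by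
    nlinarith [mul_le_mul_of_nonneg_left hlow hvv]
  rw [le_div_iff₀ hβ]
  rcases hq.eq_or_lt with hq0 | hqpos
  · rw [← hq0]
    linarith
  · exact le_of_mul_le_mul_left key hqpos

theorem PosDef.log_det_le_card_mul_log_trace_div {A : Matrix n n ℝ} (hA : A.PosDef) :
    Real.log A.det ≤ Fintype.card n * Real.log (A.trace / Fintype.card n) := by
  rcases isEmpty_or_nonempty n with hn | hn
  · simp
  set k : ℝ := (Fintype.card n : ℝ)
  have hk : 0 < k := Nat.cast_pos.mpr Fintype.card_pos
  set ev := hA.isHermitian.eigenvalues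
  have hev : ∀ i, 0 < ev i := hA.eigenvalues_pos
  have hjensen : ∑ i, k⁻¹ • Real.log (ev i) ≤ Real.log (∑ i, k⁻¹ • ev i) :=
    strictConcaveOn_log_Ioi.concaveOn.le_map_sum (fun _ _ => by positivity)
      (by simp [k]) (fun i _ => hev i)
  have hdet : Real.log A.det = ∑ i, Real.log (ev i) := by
    rw [hA.isHermitian.det_eq_prod_eigenvalues]
    exact Real.log_prod fun i _ => (hev i).ne'
  have htrace : A.trace / k = ∑ i, k⁻¹ • ev i := by
    simp [hA.isHermitian.trace_eq_sum_eigenvalues, ← mul_sum, div_eq_inv_mul, ev]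
  rw [hdet, htrace, ← div_le_iff₀' hk, div_eq_inv_mul, mul_sum]
  simpa using hjensen

end Matrix

section designMatrix

variable {d : ℕ} {β : ℝ} (x : ℕ → Fin d → ℝ)

lemma designMatrix_succ (m : ℕ) :
    designMatrix β x (m + 1) = designMatrix β x m + vecMulVec (x m) (x m) := by
  simp [designMatrix, sum_range_succ, add_assoc]

lemma det_designMatrix_zero : (designMatrix β x 0).det = β ^ d := by
  simp [designMatrix, smul_one_eq_diagonal, det_diagonal]

lemma trace_designMatrix (m : ℕ) :
    (designMatrix β x m).trace = β * d + ∑ s ∈ range m, x s ⬝ᵥ x s := by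
  simp [designMatrix, trace_add, trace_sum, trace_smul, trace_vecMulVec]

lemma posSemidef_sum_vecMulVec (m : ℕ) :
    (∑ s ∈ range m, vecMulVec (x s) (x s)).PosSemidef :=
  posSemidef_sum _ fun s _ => by simpa using posSemidef_vecMulVec_self_star (x s)

lemma posDef_designMatrix (hβ : 0 < β) (m : ℕ) : (designMatrix β x m).PosDef := by
  have hβI : (β • (1 : Matrix (Fin d) (Fin d) ℝ)).PosDef := by
    rw [smul_one_eq_diagonal]
    exact posDef_diagonal_iff.mpr fun _ => hβ
  exact hβI.add_posSemidef (posSemidef_sum_vecMulVec x m)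

lemma mul_dotProduct_self_le_designMatrix (m : ℕ) (y : Fin d → ℝ) :
    β * (y ⬝ᵥ y) ≤ y ⬝ᵥ designMatrix β x m *ᵥ y := by
  have h := (posSemidef_sum_vecMulVec x m).dotProduct_mulVec_nonneg y
  rw [star_trivial] at h
  rw [designMatrix, add_mulVec, dotProduct_add, smul_mulVec, one_mulVec, dotProduct_smul,
    smul_eq_mul]
  linarith

lemma dotProduct_inv_designMatrix_mulVec_nonneg (hβ : 0 < β) (m : ℕ) :
    0 ≤ x m ⬝ᵥ (designMatrix β x m)⁻¹ *ᵥ x m := by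
  simpa using (posDef_designMatrix x hβ m).inv.posSemidef.dotProduct_mulVec_nonneg (x m)

lemma sum_log_one_add_eq_log_det_designMatrix (hβ : 0 < β) (M : ℕ) :
    ∑ m ∈ range M, Real.log (1 + x m ⬝ᵥ (designMatrix β x m)⁻¹ *ᵥ x m) =
      Real.log (designMatrix β x M).det - d * Real.log β := by
  induction M with
  | zero => simp [det_designMatrix_zero, Real.log_pow]
  | succ m ih =>
    have hA := posDef_designMatrix x hβ m
    have hq := dotProduct_inv_designMatrix_mulVec_nonneg x hβ m
    rw [sum_range_succ, ih, designMatrix_succ, det_add_vecMulVec hA.det_pos.ne'.isUnit,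
      Real.log_mul hA.det_pos.ne' (by linarith)]
    ring

lemma sum_dotProduct_inv_designMatrix_mulVec_le (hβ : 0 < β) {M : ℕ}
    (hx : ∀ m < M, x m ⬝ᵥ x m ≤ β) :
    ∑ m ∈ range M, x m ⬝ᵥ (designMatrix β x m)⁻¹ *ᵥ x m ≤
      2 * (Real.log (designMatrix β x M).det - d * Real.log β) := by
  rw [← sum_log_one_add_eq_log_det_designMatrix x hβ, mul_sum]
  refine sum_le_sum fun m hm => Real.le_two_mul_log_one_add
    (dotProduct_inv_designMatrix_mulVec_nonneg x hβ m) ?_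
  have hle := dotProduct_inv_mulVec_le_div (posDef_designMatrix x hβ m).det_pos.ne'.isUnit hβ
    (mul_dotProduct_self_le_designMatrix x m) (x m)
  have hx1 : x m ⬝ᵥ x m / β ≤ 1 := (div_le_one hβ).mpr (hx m (mem_range.mp hm))
  linarith

lemma log_det_designMatrix_le (hβ : 0 < β) {M : ℕ} {S : ℝ}
    (hS : ∑ m ∈ range M, x m ⬝ᵥ x m ≤ S) :
    Real.log (designMatrix β x M).det ≤ d * Real.log (β + S / d) := by
  have hA := posDef_designMatrix x hβ M
  have hlogdet := hA.log_det_le_card_mul_log_trace_div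
  rw [Fintype.card_fin] at hlogdet
  refine hlogdet.trans ?_
  rcases Nat.eq_zero_or_pos d with rfl | hd
  · simp
  have hd' : (0 : ℝ) < d := Nat.cast_pos.mpr hd
  have : Nonempty (Fin d) := Fin.pos_iff_nonempty.mp hd
  gcongr
  · exact div_pos hA.trace_pos hd'
  · rw [div_le_iff₀ hd', add_mul, div_mul_cancel₀ _ hd'.ne', trace_designMatrix]
    linarith

end designMatrix

theorem stmt_8_general {d M T : ℕ} (Cx β α : ℝ) (hβ : β ≥ max 1 (Cx ^ 2)) (hα : 0 ≤ α)
    (hMT : M ≤ T)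
    (x : ℕ → Fin d → ℝ) (hx : ∀ m < M, x m ⬝ᵥ x m ≤ Cx ^ 2)
    (r : ℕ → ℝ)
    (hr : ∀ m < M, r m ≤ 2 * α * Real.sqrt (x m ⬝ᵥ (designMatrix β x m)⁻¹.mulVec (x m))) :
    ∑ m ∈ Finset.range M, r m ≤
      2 * α * Real.sqrt (2 * T * d * (Real.log (β + T * Cx ^ 2 / d) - Real.log β)) := by
  have hβ0 : 0 < β := one_pos.trans_le (le_of_max_le_left hβ)
  set q := fun m => x m ⬝ᵥ (designMatrix β x m)⁻¹ *ᵥ x m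
  have hq0 : ∀ m, 0 ≤ q m := dotProduct_inv_designMatrix_mulVec_nonneg x hβ0
  have hnorms : ∑ m ∈ range M, x m ⬝ᵥ x m ≤ T * Cx ^ 2 :=
    calc ∑ m ∈ range M, x m ⬝ᵥ x m ≤ M * Cx ^ 2 := by
          simpa using sum_le_sum fun m hm => hx m (mem_range.mp hm)
      _ ≤ T * Cx ^ 2 := by gcongr
  have hpotential : ∑ m ∈ range M, q m ≤
      2 * (d * Real.log (β + T * Cx ^ 2 / d) - d * Real.log β) := by
    have hlogdet := log_det_designMatrix_le x hβ0 hnorms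
    have hsum := sum_dotProduct_inv_designMatrix_mulVec_le x hβ0
      fun m hm => (hx m hm).trans (le_of_max_le_right hβ)
    linarith
  calc ∑ m ∈ range M, r m ≤ ∑ m ∈ range M, 2 * α * √(q m) :=
        sum_le_sum fun m hm => hr m (mem_range.mp hm)
    _ = 2 * α * ∑ m ∈ range M, √(q m) := by rw [mul_sum]
    _ ≤ 2 * α * √(M * ∑ m ∈ range M, q m) := by
        gcongr
        simpa using Real.sum_sqrt_le_sqrt_card_mul_sum (range M) hq0
    _ ≤ 2 * α * √(2 * T * d * (Real.log (β + T * Cx ^ 2 / d) - Real.log β)) := by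
        gcongr 2 * α * √?_
        calc (M : ℝ) * ∑ m ∈ range M, q m ≤ T * ∑ m ∈ range M, q m := by
              gcongr
              exact sum_nonneg fun m _ => hq0 m
          _ ≤ T * (2 * (d * Real.log (β + T * Cx ^ 2 / d) - d * Real.log β)) := by gcongr
          _ = 2 * T * d * (Real.log (β + T * Cx ^ 2 / d) - Real.log β) := by ring

/-- Cumulative regret over the regular sampling sequence: if each one-step
regret satisfies `r_m ≤ 2α√(x_mᵀ A_{m−1}⁻¹ x_m)`, then
`Σ_{m=1}^M r_m ≤ 2α √(2Td(log(β + T C_x²/d) − log β))`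
(0-indexed below: the `m`-th sample uses `A_m = βI + Σ_{s<m} x_s x_sᵀ`). -/
theorem stmt_8 {d M T : ℕ} (Cx β α : ℝ) (hβ : β ≥ max 1 (Cx ^ 2)) (hα : 0 ≤ α)
    (hMT : M ≤ T)
    (x : ℕ → Fin d → ℝ) (hx : ∀ m < M, x m ⬝ᵥ x m ≤ Cx ^ 2)
    (r : ℕ → ℝ) (hr0 : ∀ m < M, 0 ≤ r m)
    (hr : ∀ m < M, r m ≤ 2 * α * Real.sqrt (x m ⬝ᵥ (designMatrix β x m)⁻¹.mulVec (x m))) :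
    ∑ m ∈ Finset.range M, r m ≤
      2 * α * Real.sqrt (2 * T * d * (Real.log (β + T * Cx ^ 2 / d) - Real.log β)) :=
  stmt_8_general Cx β α hβ hα hMT x hx r hr
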